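/- arXiv:1111.3280 — 4 statements merged into one kernel-verified Lean document; each statement's English description precedes it below -/
import Mathlib

section
/- Let g be a finite-dimensional real nilpotent Lie algebra admitting a symplectic form ω (a closed, nondegenerate 2-form, where closedness means ω([x,y],z) + ω([y,z],x) + ω([z,x],y) = 0 for all x,y,z). Then dim z(g) ≤ dim(g/[g,g]), where z(g) is the center of g. -/
/-!
Closedness of `ω` makes the center `ω`-orthogonal to the derived algebra: for central `z`,
the cocycle identity collapses to `ω ⁅x, y⁆ z = 0`. By nondegeneracy the orthogonal of
`[g, g]` has dimension `dim g - dim [g, g] = dim (g / [g, g])`.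
-/

open Module

theorem LinearMap.BilinForm.finrank_le_finrank_quotient_of_le_orthogonal
    {K V : Type*} [Field K] [AddCommGroup V] [Module K V] [FiniteDimensional K V]
    {B : LinearMap.BilinForm K V} (hB : B.Nondegenerate) {U W : Submodule K V}
    (hW : W ≤ B.orthogonal U) : finrank K W ≤ finrank K (V ⧸ U) := by
  have hWU : finrank K W ≤ finrank K V - finrank K U :=
    (Submodule.finrank_mono hW).trans (B.finrank_orthogonal hB U).le
  have := Submodule.finrank_quotient_add_finrank U
  omega

theorem LieAlgebra.center_le_orthogonal_lie_top {R L : Type*} [CommRing R] [LieRing L]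
    [LieAlgebra R L] (ω : LinearMap.BilinForm R L)
    (hω : ∀ x y z : L, ω ⁅x, y⁆ z + ω ⁅y, z⁆ x + ω ⁅z, x⁆ y = 0) :
    (center R L).toSubmodule ≤
      ω.orthogonal (LieSubmodule.toSubmodule ⁅(⊤ : LieIdeal R L), (⊤ : LieIdeal R L)⁆) := by
  intro z hz c hc
  have hzy (y : L) : ⁅y, z⁆ = 0 := hz y
  have hzx (x : L) : ⁅z, x⁆ = 0 := by rw [← lie_skew, hzy x, neg_zero]
  have hderived : LieSubmodule.toSubmodule ⁅(⊤ : LieIdeal R L), (⊤ : LieIdeal R L)⁆ ≤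
      LinearMap.ker (ω.flip z) := by
    rw [LieSubmodule.lieIdeal_oper_eq_linear_span', Submodule.span_le]
    rintro _ ⟨x, -, y, -, rfl⟩
    simpa [hzy y, hzx x] using hω x y z
  exact hderived hc

theorem stmt_0_general (g : Type*) [LieRing g] [LieAlgebra ℝ g]
    [Module.Finite ℝ g]
    (ω : LinearMap.BilinForm ℝ g) (hnd : ω.Nondegenerate)
    (hclosed : ∀ x y z : g, ω ⁅x, y⁆ z + ω ⁅y, z⁆ x + ω ⁅z, x⁆ y = 0) :
    Module.finrank ℝ (LieAlgebra.center ℝ g) ≤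
      Module.finrank ℝ
        (g ⧸ (LieSubmodule.toSubmodule ⁅(⊤ : LieIdeal ℝ g), (⊤ : LieIdeal ℝ g)⁆)) :=
  LinearMap.BilinForm.finrank_le_finrank_quotient_of_le_orthogonal hnd
    (LieAlgebra.center_le_orthogonal_lie_top ω hclosed)

theorem stmt_0 (g : Type*) [LieRing g] [LieAlgebra ℝ g]
    [Module.Finite ℝ g] [LieModule.IsNilpotent g g]
    (ω : LinearMap.BilinForm ℝ g) (halt : ω.IsAlt) (hnd : ω.Nondegenerate)
    (hclosed : ∀ x y z : g, ω ⁅x, y⁆ z + ω ⁅y, z⁆ x + ω ⁅z, x⁆ y = 0) :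
    Module.finrank ℝ (LieAlgebra.center ℝ g) ≤
      Module.finrank ℝ
        (g ⧸ (LieSubmodule.toSubmodule ⁅(⊤ : LieIdeal ℝ g), (⊤ : LieIdeal ℝ g)⁆)) :=
  stmt_0_general g ω hnd hclosed
end

section
/- The 6-dimensional real Lie algebra g with basis e₁,…,e₆ and nonzero brackets [e₁,e₂]=e₃, [e₁,e₃]=e₄, [e₂,e₃]=e₅ admits no symplectic structure: every alternating bilinear form ω on g satisfying ω([x,y],z) + ω([y,z],x) + ω([z,x],y) = 0 for all x,y,z is degenerate. -/
/-!
The vectors e₄, e₅, e₆ are central and e₃, e₄, e₅ are brackets. For central z the cocycle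
identity collapses to ω([x, y], z) = 0, so span(e₃, …, e₆) is ω-orthogonal to span(e₄, e₅, e₆)
(using also ω(e₆, e₆) = 0). A nondegenerate form on a 6-dimensional space admits no orthogonal
pair of subspaces of dimensions 4 and 3.
-/

open Module

namespace LinearMap.BilinForm

section Field

variable {K V : Type*} [Field K] [AddCommGroup V] [Module K V] {B : LinearMap.BilinForm K V}

theorem finrank_add_finrank_le_of_le_orthogonal [FiniteDimensional K V] (hB : B.Nondegenerate)
    {W U : Submodule K V} (hUW : U ≤ B.orthogonal W) :
    finrank K W + finrank K U ≤ finrank K V := by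
  have hW := finrank_add_finrank_orthogonal' (B := B) W
  rw [hB.ker_eq_bot, inf_bot_eq, finrank_bot, add_zero] at hW
  have := Submodule.finrank_mono hUW
  lia

theorem card_add_card_le_of_apply_basis_eq_zero {ι : Type*} [Fintype ι] (hB : B.Nondegenerate)
    (b : Basis ι K V) {s t : Finset ι} (hst : ∀ i ∈ s, ∀ j ∈ t, B (b i) (b j) = 0) :
    s.card + t.card ≤ Fintype.card ι := by
  have := b.finiteDimensional_of_finite
  set W := Submodule.span K (Set.range (b ∘ ((↑) : s → ι)))
  set U := Submodule.span K (Set.range (b ∘ ((↑) : t → ι)))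
  have hUW : U ≤ B.orthogonal W := by
    refine Submodule.span_le.mpr ?_
    rintro _ ⟨j, rfl⟩
    show b j ∈ B.orthogonal W
    have hW : W ≤ LinearMap.ker (B.flip (b j)) := by
      refine Submodule.span_le.mpr ?_
      rintro _ ⟨i, rfl⟩
      exact hst i i.2 j j.2
    exact fun w hw => hW hw
  have hrank := finrank_add_finrank_le_of_le_orthogonal hB hUW
  rwa [finrank_span_eq_card (b.linearIndependent.comp _ Subtype.val_injective),
    finrank_span_eq_card (b.linearIndependent.comp _ Subtype.val_injective),
    Fintype.card_coe, Fintype.card_coe, finrank_eq_card_basis b] at hrank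

end Field

theorem apply_lie_eq_zero_of_central {R L : Type*} [CommRing R] [LieRing L] [Module R L]
    {ω : LinearMap.BilinForm R L} (hω : ∀ x y z : L, ω ⁅x, y⁆ z + ω ⁅y, z⁆ x + ω ⁅z, x⁆ y = 0)
    {z : L} (hz : ∀ x : L, ⁅x, z⁆ = 0) (x y : L) : ω ⁅x, y⁆ z = 0 := by
  have h := hω x y z
  rwa [hz y, ← lie_skew z x, hz x, neg_zero, map_zero, LinearMap.zero_apply,
    LinearMap.zero_apply, add_zero, add_zero] at h

end LinearMap.BilinForm

theorem Module.Basis.lie_eq_zero_of_forall_lie_basis {ι R L : Type*} [CommRing R] [LieRing L]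
    [LieAlgebra R L] (b : Basis ι R L) {z : L} (hz : ∀ i, ⁅z, b i⁆ = 0) (x : L) :
    ⁅x, z⁆ = 0 := by
  have had : LieAlgebra.ad R L z = 0 := b.ext hz
  rw [← lie_skew, neg_eq_zero]
  exact LinearMap.congr_fun had x

theorem stmt_6 (g : Type*) [LieRing g] [LieAlgebra ℝ g]
    (b : Module.Basis (Fin 6) ℝ g)
    (h12 : ⁅b 0, b 1⁆ = b 2) (h13 : ⁅b 0, b 2⁆ = b 3) (h23 : ⁅b 1, b 2⁆ = b 4)
    (hzero : ∀ i j : Fin 6,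
      ((i, j) : Fin 6 × Fin 6) ∉
        ({(0, 1), (1, 0), (0, 2), (2, 0), (1, 2), (2, 1)} : Set (Fin 6 × Fin 6)) →
      ⁅b i, b j⁆ = 0) :
    ∀ ω : LinearMap.BilinForm ℝ g, ω.IsAlt →
      (∀ x y z : g, ω ⁅x, y⁆ z + ω ⁅y, z⁆ x + ω ⁅z, x⁆ y = 0) →
      ¬ ω.Nondegenerate := by
  intro ω hω hcocycle hnd
  have hcentral : ∀ j ∈ ({3, 4, 5} : Finset (Fin 6)), ∀ x : g, ⁅x, b j⁆ = 0 := by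
    intro j hj
    refine b.lie_eq_zero_of_forall_lie_basis fun i => hzero j i ?_
    fin_cases hj <;> fin_cases i <;> simp
  have hderived : ∀ j ∈ ({3, 4, 5} : Finset (Fin 6)), ∀ x y : g, ω ⁅x, y⁆ (b j) = 0 :=
    fun j hj => LinearMap.BilinForm.apply_lie_eq_zero_of_central hcocycle (hcentral j hj)
  have horth : ∀ i ∈ ({2, 3, 4, 5} : Finset (Fin 6)), ∀ j ∈ ({3, 4, 5} : Finset (Fin 6)),
      ω (b i) (b j) = 0 := by
    intro i hi j hj
    fin_cases hi
    · rw [← h12]; exact hderived j hj _ _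
    · rw [← h13]; exact hderived j hj _ _
    · rw [← h23]; exact hderived j hj _ _
    · rw [← hω.neg_eq, neg_eq_zero]
      fin_cases hj
      · rw [← h13]; exact hderived 5 (by simp) _ _
      · rw [← h23]; exact hderived 5 (by simp) _ _
      · exact hω _
  have := LinearMap.BilinForm.card_add_card_le_of_apply_basis_eq_zero hnd b horth
  simp at this
end

section
/- Let g be a finite-dimensional real nilpotent Lie algebra with dim z(g) > dim(g/[g,g]). Then g admits no symplectic structure, i.e., there is no nondegenerate alternating bilinear form ω on g with ω([x,y],z) + ω([y,z],x) + ω([z,x],y) = 0 for all x,y,z. -/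
/-!
For a closed 2-form `ω` and a central element `z`, the cocycle identity collapses to
`ω ⁅x, y⁆ z = 0`, so `ω(·, z)` vanishes on `[g, g]` and defines a functional on `g ⧸ [g, g]`.
Nondegeneracy makes `z ↦ ω(·, z)` injective, hence `dim z(g) ≤ dim (g ⧸ [g, g])`.
-/

namespace LinearMap.BilinForm

variable {K L : Type*} [Field K] [LieRing L] [LieAlgebra K L]

/-- `ω` is closed as a Chevalley–Eilenberg 2-cochain with trivial coefficients. -/
def IsLieCocycle (ω : LinearMap.BilinForm K L) : Prop :=
  ∀ x y z : L, ω ⁅x, y⁆ z + ω ⁅y, z⁆ x + ω ⁅z, x⁆ y = 0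

namespace IsLieCocycle

variable {ω : LinearMap.BilinForm K L}

theorem apply_lie_eq_zero_of_mem_center (hω : ω.IsLieCocycle) {z : L}
    (hz : z ∈ LieAlgebra.center K L) (x y : L) : ω ⁅x, y⁆ z = 0 := by
  have hyz : ⁅y, z⁆ = 0 := hz y
  have hzx : ⁅z, x⁆ = 0 := by rw [← lie_skew, hz x, neg_zero]
  simpa [hyz, hzx] using hω x y z

theorem flip_mem_dualAnnihilator_derived (hω : ω.IsLieCocycle) {z : L}
    (hz : z ∈ LieAlgebra.center K L) :
    ω.flip z ∈ (LieSubmodule.toSubmodule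
      (⁅(⊤ : LieIdeal K L), (⊤ : LieIdeal K L)⁆ : LieIdeal K L)).dualAnnihilator := by
  rw [Submodule.mem_dualAnnihilator]
  suffices (LieSubmodule.toSubmodule
      (⁅(⊤ : LieIdeal K L), (⊤ : LieIdeal K L)⁆ : LieIdeal K L)) ≤ LinearMap.ker (ω.flip z) from
    fun w hw ↦ this hw
  rw [LieSubmodule.lieIdeal_oper_eq_linear_span, Submodule.span_le]
  rintro _ ⟨x, y, rfl⟩
  exact hω.apply_lie_eq_zero_of_mem_center hz x y

theorem finrank_center_le [Module.Finite K L] (hω : ω.IsLieCocycle) (hsep : ω.SeparatingRight) :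
    Module.finrank K (LieAlgebra.center K L) ≤
      Module.finrank K (L ⧸ LieSubmodule.toSubmodule
        (⁅(⊤ : LieIdeal K L), (⊤ : LieIdeal K L)⁆ : LieIdeal K L)) := by
  set D := LieSubmodule.toSubmodule (⁅(⊤ : LieIdeal K L), (⊤ : LieIdeal K L)⁆ : LieIdeal K L)
  let f : LieAlgebra.center K L →ₗ[K] D.dualAnnihilator :=
    (ω.flip ∘ₗ (LieAlgebra.center K L).toSubmodule.subtype).codRestrict _
      fun z ↦ hω.flip_mem_dualAnnihilator_derived z.2
  have hf : Function.Injective f := by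
    refine (injective_iff_map_eq_zero f).mpr fun z hz ↦ Subtype.ext (hsep z fun x ↦ ?_)
    exact congr((($hz : D.dualAnnihilator) : Module.Dual K L) x)
  calc Module.finrank K (LieAlgebra.center K L)
      ≤ Module.finrank K D.dualAnnihilator := LinearMap.finrank_le_finrank_of_injective hf
    _ = Module.finrank K (Module.Dual K (L ⧸ D)) :=
      (Submodule.dualQuotEquivDualAnnihilator D).finrank_eq.symm
    _ = Module.finrank K (L ⧸ D) := Subspace.dual_finrank_eq

end IsLieCocycle

end LinearMap.BilinForm

theorem stmt_18_general (g : Type*) [LieRing g] [LieAlgebra ℝ g]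
    [Module.Finite ℝ g]
    (h : Module.finrank ℝ (LieAlgebra.center ℝ g) >
      Module.finrank ℝ
        (g ⧸ LieSubmodule.toSubmodule
          (⁅(⊤ : LieIdeal ℝ g), (⊤ : LieIdeal ℝ g)⁆ : LieIdeal ℝ g))) :
    ¬ ∃ ω : LinearMap.BilinForm ℝ g, ω.IsAlt ∧ ω.Nondegenerate ∧
        ∀ x y z : g, ω ⁅x, y⁆ z + ω ⁅y, z⁆ x + ω ⁅z, x⁆ y = 0 := by
  rintro ⟨ω, -, hnd, hclosed⟩
  exact (LinearMap.BilinForm.IsLieCocycle.finrank_center_le hclosed hnd.2).not_gt h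

theorem stmt_18 (g : Type*) [LieRing g] [LieAlgebra ℝ g]
    [Module.Finite ℝ g] [LieRing.IsNilpotent g]
    (h : Module.finrank ℝ (LieAlgebra.center ℝ g) >
      Module.finrank ℝ
        (g ⧸ LieSubmodule.toSubmodule
          (⁅(⊤ : LieIdeal ℝ g), (⊤ : LieIdeal ℝ g)⁆ : LieIdeal ℝ g))) :
    ¬ ∃ ω : LinearMap.BilinForm ℝ g, ω.IsAlt ∧ ω.Nondegenerate ∧
        ∀ x y z : g, ω ⁅x, y⁆ z + ω ⁅y, z⁆ x + ω ⁅z, x⁆ y = 0 :=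
  stmt_18_general g h
end

section
/- Let g be the 10-dimensional real Lie algebra with basis e₁,…,e₁₀, where e₁,…,e₄ are generators, e₅=[e₂,e₁], e₆=[e₃,e₁], e₇=[e₃,e₂], e₈=[e₄,e₁], e₉=[e₄,e₂], e₁₀=[e₄,e₃] and all brackets of two elements among e₅,…,e₁₀, or of a generator with an element of e₅,…,e₁₀, vanish. Then g admits no symplectic structure: every alternating bilinear form ω satisfying ω([x,y],z)+ω([y,z],x)+ω([z,x],y)=0 for all x,y,z is degenerate. -/
/-!
For a closed 2-form ω and a central z, the cocycle identity collapses to ω([x, y], z) = 0, so the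
centre lies in the ω-orthogonal of [g, g]; if ω is nondegenerate this forces
dim 𝔷(g) + dim [g, g] ≤ dim g (Benson–Gordon). Here e₅, …, e₁₀ span a 6-dimensional subspace
contained both in the centre and in [g, g], and 6 + 6 > 10.
-/

open LieAlgebra Module
open LinearMap (BilinForm)

namespace LieAlgebra

variable {R L : Type*} [CommRing R] [LieRing L] [LieAlgebra R L]

theorem lie_mem_derivedSeries_one (x y : L) : ⁅x, y⁆ ∈ derivedSeries R L 1 :=
  (coe_derivedSeries_one_eq R L).ge (Submodule.subset_span ⟨x, y, rfl⟩)

theorem mem_center_of_forall_basis_lie_eq_zero {ι : Type*} (b : Module.Basis ι R L) {z : L}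
    (hz : ∀ i, ⁅b i, z⁆ = 0) : z ∈ center R L := by
  have had : (ad R L z : L →ₗ[R] L) = 0 := b.ext fun i => by
    rw [ad_apply, ← lie_skew, hz i, neg_zero, LinearMap.zero_apply]
  rw [LieModule.mem_maxTrivSubmodule]
  intro x
  rw [← lie_skew, neg_eq_zero]
  exact LinearMap.congr_fun had x

end LieAlgebra

theorem LinearIndependent.card_le_finrank_of_forall_mem {K V ι : Type*} [Field K]
    [AddCommGroup V] [Module K V] [FiniteDimensional K V] [Fintype ι] {v : ι → V}
    (hv : LinearIndependent K v) {W : Submodule K V} (hW : ∀ i, v i ∈ W) :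
    Fintype.card ι ≤ finrank K W := by
  rw [← finrank_span_eq_card hv]
  exact Submodule.finrank_mono (Submodule.span_le.mpr (Set.range_subset_iff.mpr hW))

namespace LinearMap.BilinForm

variable {R L : Type*} [CommRing R] [LieRing L] [LieAlgebra R L] {ω : BilinForm R L}

theorem apply_lie_eq_zero_of_mem_center
    (hω : ∀ x y z : L, ω ⁅x, y⁆ z + ω ⁅y, z⁆ x + ω ⁅z, x⁆ y = 0)
    (x y : L) {z : L} (hz : z ∈ center R L) : ω ⁅x, y⁆ z = 0 := by
  have hz' : ∀ w : L, ⁅w, z⁆ = 0 := (LieModule.mem_maxTrivSubmodule R L L z).mp hz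
  simpa [hz' y, ← lie_skew z x, hz' x] using hω x y z

theorem center_le_orthogonal_derivedSeries_one
    (hω : ∀ x y z : L, ω ⁅x, y⁆ z + ω ⁅y, z⁆ x + ω ⁅z, x⁆ y = 0) :
    (center R L : Submodule R L) ≤ ω.orthogonal (derivedSeries R L 1) := by
  intro z hz
  suffices (derivedSeries R L 1 : Submodule R L) ≤ LinearMap.ker (ω.flip z) from
    mem_orthogonal_iff.mpr fun n hn => this hn
  rw [coe_derivedSeries_one_eq, Submodule.span_le]
  rintro _ ⟨x, y, rfl⟩
  exact apply_lie_eq_zero_of_mem_center hω x y hz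

end LinearMap.BilinForm

theorem LieAlgebra.finrank_center_add_finrank_derivedSeries_one_le {K L : Type*} [Field K]
    [LieRing L] [LieAlgebra K L] [FiniteDimensional K L] {ω : BilinForm K L}
    (hω : ∀ x y z : L, ω ⁅x, y⁆ z + ω ⁅y, z⁆ x + ω ⁅z, x⁆ y = 0) (hnd : ω.Nondegenerate) :
    finrank K (center K L) + finrank K (derivedSeries K L 1) ≤ finrank K L := by
  have h := Submodule.finrank_mono (LinearMap.BilinForm.center_le_orthogonal_derivedSeries_one hω)
  rw [LinearMap.BilinForm.finrank_orthogonal hnd] at h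
  exact Nat.add_le_of_le_sub (Submodule.finrank_le _) h

theorem stmt_19 (g : Type*) [LieRing g] [LieAlgebra ℝ g]
    (b : Module.Basis (Fin 10) ℝ g)
    (h21 : ⁅b 1, b 0⁆ = b 4) (h31 : ⁅b 2, b 0⁆ = b 5) (h32 : ⁅b 2, b 1⁆ = b 6)
    (h41 : ⁅b 3, b 0⁆ = b 7) (h42 : ⁅b 3, b 1⁆ = b 8) (h43 : ⁅b 3, b 2⁆ = b 9)
    (hzero : ∀ i j : Fin 10,
      ((i, j) : Fin 10 × Fin 10) ∉
        ({(0, 1), (1, 0), (0, 2), (2, 0), (0, 3), (3, 0),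
          (1, 2), (2, 1), (1, 3), (3, 1), (2, 3), (3, 2)} : Set (Fin 10 × Fin 10)) →
      ⁅b i, b j⁆ = 0) :
    ∀ ω : LinearMap.BilinForm ℝ g, ω.IsAlt →
      (∀ x y z : g, ω ⁅x, y⁆ z + ω ⁅y, z⁆ x + ω ⁅z, x⁆ y = 0) →
      ¬ ω.Nondegenerate := by
  intro ω _ hω hnd
  have : FiniteDimensional ℝ g := b.finiteDimensional_of_finite
  set v : Fin 6 → g := fun k => b (Fin.natAdd 4 k)
  have hv : LinearIndependent ℝ v := b.linearIndependent.comp _ (Fin.natAdd_injective 6 4)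
  have hcenter : ∀ k, v k ∈ center ℝ g := fun k =>
    mem_center_of_forall_basis_lie_eq_zero b fun i => hzero i _ (by
      simp only [Set.mem_insert_iff, Set.mem_singleton_iff, Prod.mk.injEq]
      fin_cases k <;> decide +revert)
  have hderived : ∀ k, v k ∈ derivedSeries ℝ g 1 := by
    suffices ∀ k, ∃ x y : g, ⁅x, y⁆ = v k by
      intro k
      obtain ⟨x, y, hxy⟩ := this k
      exact hxy ▸ lie_mem_derivedSeries_one x y
    intro k
    fin_cases k
    exacts [⟨_, _, h21⟩, ⟨_, _, h31⟩, ⟨_, _, h32⟩, ⟨_, _, h41⟩, ⟨_, _, h42⟩, ⟨_, _, h43⟩]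
  have hc : 6 ≤ finrank ℝ (center ℝ g) := hv.card_le_finrank_of_forall_mem hcenter
  have hd : 6 ≤ finrank ℝ (derivedSeries ℝ g 1) := hv.card_le_finrank_of_forall_mem hderived
  have hsum := finrank_center_add_finrank_derivedSeries_one_le hω hnd
  rw [finrank_eq_card_basis b, Fintype.card_fin] at hsum
  omega
end
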